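/- There exists k₀ such that for all integers k ≥ k₀ there exists an oriented k-graph with Property O having at most k²(ln k)·k! edges; that is, f(k) ≤ (k² ln k)·k! for sufficiently large k. -/

import Mathlib

/-!
Take `n = ⌊k²/2⌋` vertices and `m = ⌊k² log k · k!⌋` distinct `k`-subsets of them, and orient
each subset independently and uniformly. A linear order is consistent with exactly one of the `k!`
orientations of each subset, so it is consistent with no edge with probability
`(1 - 1/k!)^m ≤ exp (-m/k!) < 1/n!`, because `log n! ≤ n log n ≤ k² log k - 1`. A union bound over
the `n!` orders leaves an orientation with Property O. The `m` subsets exist because Stirling's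
upper bound `k! ≤ e √k (k/e)^k` gives `k³ (k!)² ≤ (k²/4)^k ≤ (n + 1 - k)^k ≤ k! C(n, k)` for
large `k`.
-/

open Finset Function Equiv
open scoped Nat

theorem exists_perm_strictMono_comp {α : Type*} [LinearOrder α] {k : ℕ} {g : Fin k → α}
    (hg : Injective g) : ∃ π : Perm (Fin k), StrictMono (g ∘ π) :=
  ⟨Tuple.sort g, (Tuple.monotone_sort g).strictMono_of_injective (hg.comp (Tuple.sort g).injective)⟩

theorem card_filter_not_strictMono_comp_le {α : Type*} [LinearOrder α] {k : ℕ} {g : Fin k → α}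
    (hg : Injective g) : #{π : Perm (Fin k) | ¬ StrictMono (g ∘ π)} ≤ (k)! - 1 := by
  obtain ⟨π, hπ⟩ := exists_perm_strictMono_comp hg
  have hlt := card_lt_card <|
    (filter_ssubset (p := fun π : Perm (Fin k) => ¬ StrictMono (g ∘ π))).2
      ⟨π, mem_univ π, not_not.2 hπ⟩
  rw [card_univ, Fintype.card_perm, Fintype.card_fin] at hlt
  omega

theorem exists_orientation_forall_exists_strictMono {ι κ V α : Type*} [Fintype ι] [DecidableEq ι]
    [Fintype κ] [LinearOrder α] {k : ℕ} (a : ι → Fin k → V) (ρ : κ → V → α)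
    (hρa : ∀ j i, Injective (ρ j ∘ a i))
    (h : Fintype.card κ * ((k)! - 1) ^ Fintype.card ι < k ! ^ Fintype.card ι) :
    ∃ f : ι → Perm (Fin k), ∀ j, ∃ i, StrictMono (ρ j ∘ a i ∘ f i) := by
  by_contra! hbad
  let missing (j : κ) : Finset (ι → Perm (Fin k)) :=
    Fintype.piFinset fun i => {π | ¬ StrictMono (ρ j ∘ a i ∘ π)}
  have hcover : (univ : Finset (ι → Perm (Fin k))) ⊆ univ.biUnion missing := by
    intro f _
    obtain ⟨j, hj⟩ := hbad f
    simpa [missing] using ⟨j, hj⟩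
  have hmissing (j : κ) : #(missing j) ≤ ((k)! - 1) ^ Fintype.card ι := by
    rw [Fintype.card_piFinset]
    exact prod_le_pow_card _ _ _ fun i _ => card_filter_not_strictMono_comp_le (hρa j i)
  have := (card_le_card hcover).trans <|
    card_biUnion_le.trans (sum_le_card_nsmul _ _ _ fun j _ => hmissing j)
  simp only [Finset.card_univ, Fintype.card_pi, Fintype.card_perm, Fintype.card_fin, prod_const,
    smul_eq_mul] at this
  omega

theorem exists_propertyO_card_le {k n m : ℕ} (hm : m ≤ n.choose k)
    (h : n ! * ((k)! - 1) ^ m < k ! ^ m) :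
    ∃ E : Finset (Fin k → Fin n), #E ≤ m ∧ (∀ e ∈ E, Injective e) ∧
      (∀ e ∈ E, ∀ f ∈ E, Set.range e = Set.range f → e = f) ∧
      (∀ σ : Fin n → ℕ, Injective σ → ∃ e ∈ E, ∀ i j : Fin k, i < j → σ (e i) < σ (e j)) := by
  obtain ⟨T, hT, rfl⟩ :=
    exists_subset_card_eq (show m ≤ #(powersetCard k (univ : Finset (Fin n))) by simpa using hm)
  have hTcard (A : T) : (A : Finset (Fin n)).card = k := (mem_powersetCard_univ.1 (hT A.2))
  let a (A : T) : Fin k → Fin n := (A : Finset (Fin n)).orderEmbOfFin (hTcard A)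
  have ha (A : T) : Set.range (a A) = A := range_orderEmbOfFin _ _
  have ha_inj (A : T) : Injective (a A) := (orderEmbOfFin _ _).injective
  obtain ⟨f, hf⟩ := exists_orientation_forall_exists_strictMono a (fun π : Perm (Fin n) => ⇑π)
    (fun π A => π.injective.comp (ha_inj A))
    (by simpa [Fintype.card_perm] using h)
  have hrange (A : T) : Set.range (a A ∘ f A) = A := by rw [EquivLike.range_comp, ha]
  refine ⟨univ.image fun A => a A ∘ f A, card_image_le.trans (by simp), ?_, ?_, ?_⟩
  · simp only [mem_image, mem_univ, true_and, forall_exists_index, forall_apply_eq_imp_iff]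
    exact fun A => (ha_inj A).comp (f A).injective
  · simp only [mem_image, mem_univ, true_and, forall_exists_index, forall_apply_eq_imp_iff]
    intro A B hAB
    rw [hrange, hrange, Finset.coe_inj, ← Subtype.ext_iff] at hAB
    rw [hAB]
  · intro σ hσ
    obtain ⟨π, hπ⟩ := exists_perm_strictMono_comp hσ
    obtain ⟨A, hA⟩ := hf π.symm
    refine ⟨a A ∘ f A, mem_image_of_mem _ (mem_univ A), fun i j hij => ?_⟩
    simpa using hπ (hA hij)

section

open Real

theorem mul_sub_one_pow_lt_pow {K N : ℝ} {m : ℕ} (hK : 1 ≤ K) (hN : 0 < N) (hm : K * log N < m) :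
    N * (K - 1) ^ m < K ^ m := by
  have hK0 : 0 < K := one_pos.trans_le hK
  have hstep : K - 1 ≤ K * exp (-K⁻¹) := by
    have := add_one_le_exp (-K⁻¹)
    calc K - 1 = K * (-K⁻¹ + 1) := by field_simp; ring
      _ ≤ K * exp (-K⁻¹) := by gcongr
  have hdecay : N * exp (-K⁻¹) ^ m < 1 := by
    rw [← exp_nat_mul, ← exp_log hN, ← exp_add, exp_lt_one_iff]
    have : log N < m * K⁻¹ := by rw [← div_eq_mul_inv, lt_div_iff₀ hK0]; linarith
    linarith
  calc N * (K - 1) ^ m ≤ N * (K * exp (-K⁻¹)) ^ m := by gcongr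
    _ = N * exp (-K⁻¹) ^ m * K ^ m := by ring
    _ < 1 * K ^ m := by gcongr
    _ = K ^ m := one_mul _

theorem factorial_le_exp_one_mul_sqrt_mul_pow {k : ℕ} (hk : k ≠ 0) :
    (k ! : ℝ) ≤ exp 1 * √k * (k / exp 1) ^ k := by
  obtain ⟨j, rfl⟩ := Nat.exists_eq_succ_of_ne_zero hk
  have h : Stirling.stirlingSeq (j + 1) ≤ Stirling.stirlingSeq 1 :=
    Stirling.stirlingSeq'_antitone (Nat.zero_le j)
  rw [Stirling.stirlingSeq_one, Stirling.stirlingSeq, div_le_iff₀ (by positivity)] at h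
  refine h.trans_eq ?_
  rw [sqrt_mul zero_le_two]
  push_cast
  field_simp

theorem pow_three_mul_factorial_le_choose {k n : ℕ} (hk : k ≠ 0) (hkn : k ^ 2 ≤ 4 * (n + 1 - k))
    (hexp : exp 2 * k ^ 4 ≤ (exp 2 / 4) ^ k) : (k : ℝ) ^ 3 * k ! ≤ n.choose k := by
  have hfac : ((k ! : ℕ) : ℝ) ^ 2 ≤ exp 2 * k * ((k : ℝ) ^ 2 / exp 2) ^ k := by
    calc ((k ! : ℕ) : ℝ) ^ 2 ≤ (exp 1 * √k * (k / exp 1) ^ k) ^ 2 := by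
          gcongr; exact factorial_le_exp_one_mul_sqrt_mul_pow hk
      _ = exp 2 * k * ((k : ℝ) ^ 2 / exp 2) ^ k := by
          rw [mul_pow, mul_pow, sq_sqrt (Nat.cast_nonneg k), ← exp_nat_mul, ← pow_mul,
            div_pow, div_pow, ← exp_nat_mul, ← pow_mul, ← exp_nat_mul]
          push_cast
          ring_nf
  have hkn' : (k : ℝ) ^ 2 / 4 ≤ (n + 1 - k : ℕ) := by
    rw [div_le_iff₀ (by norm_num)]; exact_mod_cast (by linarith : k ^ 2 ≤ (n + 1 - k) * 4)
  have hkey : (k : ℝ) ^ 3 * k ! * k ! ≤ (n + 1 - k : ℕ) ^ k := by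
    calc (k : ℝ) ^ 3 * k ! * k ! = k ^ 3 * ((k ! : ℕ) : ℝ) ^ 2 := by ring
      _ ≤ k ^ 3 * (exp 2 * k * ((k : ℝ) ^ 2 / exp 2) ^ k) := by gcongr
      _ = exp 2 * k ^ 4 * ((k : ℝ) ^ 2 / exp 2) ^ k := by ring
      _ ≤ (exp 2 / 4) ^ k * ((k : ℝ) ^ 2 / exp 2) ^ k := by gcongr
      _ = ((k : ℝ) ^ 2 / 4) ^ k := by rw [← mul_pow]; field_simp
      _ ≤ (n + 1 - k : ℕ) ^ k := by gcongr
  calc (k : ℝ) ^ 3 * k ! = (k : ℝ) ^ 3 * k ! * k ! / k ! := by field_simp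
    _ ≤ ((n + 1 - k : ℕ) : ℝ) ^ k / k ! := by gcongr
    _ ≤ n.choose k := Nat.pow_le_choose k n

theorem log_factorial_add_one_le {k : ℕ} (hk : 2 ≤ k) :
    log ((k * k / 2)! : ℝ) + 1 ≤ k ^ 2 * log k := by
  set n := k * k / 2
  have hn : (n : ℝ) ≤ k ^ 2 / 2 := by
    simpa [sq] using (Nat.cast_div_le (α := ℝ) (m := k * k) (n := 2))
  have hn1 : 1 ≤ n := by
    have : 2 * 2 ≤ k * k := Nat.mul_le_mul hk hk
    omega
  have hlog2 := log_two_gt_d9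
  have hk2 : (4 : ℝ) ≤ k ^ 2 := by
    have : (2 : ℝ) ≤ k := by exact_mod_cast hk
    nlinarith
  calc log (n ! : ℝ) + 1 ≤ log ((n : ℝ) ^ n) + 1 := by
        gcongr
        exact_mod_cast n.factorial_le_pow
    _ = n * log n + 1 := by rw [log_pow]
    _ ≤ k ^ 2 / 2 * log (k ^ 2 / 2) + 1 := by
        gcongr
    _ = k ^ 2 * log k - (k ^ 2 / 2 * log 2 - 1) := by
        rw [log_div (by positivity) (by norm_num), log_pow]; push_cast; ring
    _ ≤ k ^ 2 * log k := by nlinarith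

theorem eventually_exp_two_mul_pow_four_le :
    ∀ᶠ k : ℕ in Filter.atTop, exp 2 * k ^ 4 ≤ (exp 2 / 4) ^ k := by
  have hr : (1 : ℝ) < exp 2 / 4 := by
    have := exp_one_gt_d9
    rw [show (2 : ℝ) = 1 + 1 by norm_num, exp_add]
    nlinarith
  filter_upwards [(isLittleO_pow_const_const_pow_of_one_lt (R := ℝ) 4 hr).bound
    (inv_pos.2 (exp_pos 2))] with k hk
  rw [norm_pow, Real.norm_natCast, norm_pow, Real.norm_of_nonneg (by positivity)] at hk
  rwa [← le_div_iff₀' (exp_pos 2), div_eq_inv_mul]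

end

open Real in
/-- There exists `k₀` such that for all integers `k ≥ k₀` there
exists an oriented `k`-graph with Property O having at most `k²(ln k)·k!` edges;
that is, `f(k) ≤ (k² ln k)·k!` for sufficiently large `k`. -/
theorem stmt_17 :
    ∃ k₀ : ℕ, ∀ k : ℕ, k₀ ≤ k →
      ∃ (n : ℕ) (E : Finset (Fin k → Fin n)),
        (∀ e ∈ E, Function.Injective e) ∧
        (∀ e ∈ E, ∀ f ∈ E, Set.range e = Set.range f → e = f) ∧
        (∀ σ : Fin n → ℕ, Function.Injective σ →
          ∃ e ∈ E, ∀ i j : Fin k, i < j → σ (e i) < σ (e j)) ∧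
        (E.card : ℝ) ≤ (k : ℝ) ^ 2 * Real.log k * (Nat.factorial k : ℝ) := by
  obtain ⟨k₁, hk₁⟩ := Filter.eventually_atTop.1 eventually_exp_two_mul_pow_four_le
  refine ⟨max k₁ 4, fun k hk => ?_⟩
  have hk4 : 4 ≤ k := le_of_max_le_right hk
  have hexp := hk₁ k (le_of_max_le_left hk)
  set m := ⌊(k : ℝ) ^ 2 * log k * k !⌋₊
  have hmk : (m : ℝ) ≤ k ^ 2 * log k * k ! := Nat.floor_le (by positivity)
  have hm : m ≤ (k * k / 2).choose k := by
    have hkk : 4 * k ≤ k * k := Nat.mul_le_mul_right k hk4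
    have hchoose :=
      pow_three_mul_factorial_le_choose (n := k * k / 2) (by omega) (by rw [sq]; omega) hexp
    have hlog : log k ≤ k := log_le_self (Nat.cast_nonneg k)
    have hcube : (k : ℝ) ^ 2 * log k * k ! ≤ k ^ 3 * k ! :=
      calc _ ≤ (k : ℝ) ^ 2 * k * k ! := by gcongr
        _ = _ := by ring
    exact_mod_cast hmk.trans (hcube.trans hchoose)
  have hcover : (k * k / 2)! * ((k)! - 1) ^ m < k ! ^ m := by
    have hK : (1 : ℝ) ≤ k ! := by exact_mod_cast k.factorial_pos
    have hlog := log_factorial_add_one_le (k := k) (by omega)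
    have hreal := mul_sub_one_pow_lt_pow (m := m) hK (by positivity : (0 : ℝ) < (k * k / 2)!) (by
      have := Nat.lt_floor_add_one ((k : ℝ) ^ 2 * log k * k !)
      nlinarith)
    rw [← Nat.cast_one, ← Nat.cast_sub k.factorial_pos] at hreal
    exact_mod_cast hreal
  obtain ⟨E, hEm, hE⟩ := exists_propertyO_card_le hm hcover
  exact ⟨_, E, hE.1, hE.2.1, hE.2.2, (Nat.cast_le.2 hEm).trans hmk⟩
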